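/- Let B ∈ L(H,K) have closed range, and let Q ∈ L(H), P ∈ L(K) be bounded projections with N(Q) = N(B) and R(P) = R(B). Then there exists a unique bounded operator C ∈ L(K,H) satisfying BC = P and R(C) = R(Q). Moreover this C satisfies BCB = B, CBC = C, CB = Q, and N(C) = N(P). -/

import Mathlib

/-! $B$ maps $R(Q)$ bijectively onto $R(B)$: injectively since $N(Q) = N(B)$ and $Q$ fixes $R(Q)$,
surjectively since $BQ = B$. Both ranges are ranges of idempotents ($R(B) = R(P)$), hence closed,
so the open mapping theorem makes the inverse bounded, and $C := (B|_{R(Q)})^{-1} P$.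
Everything else is algebra in $BC = P$, $CB = Q$, $QC = C$: they give $CP = CBC = C$, and any $C'$
with $BC' = P$, $R(C') = R(Q)$ satisfies $C' = QC' = CBC' = CP = C$. -/

open ContinuousLinearMap

namespace ContinuousLinearMap

section Algebra

variable {R M N : Type*} [Ring R] [TopologicalSpace M] [AddCommGroup M] [Module R M]
  [TopologicalSpace N] [AddCommGroup N] [Module R N]

theorem comp_eq_self_of_ker_le {Q : M →L[R] M} (hQ : IsIdempotentElem Q) {B : M →L[R] N}
    (h : Q.ker ≤ B.ker) : B ∘L Q = B :=
  coe_injective <| (LinearMap.IsIdempotentElem.comp_eq_left_iff hQ.toLinearMap _).2 h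

theorem comp_eq_self_of_range_le {P : N →L[R] N} (hP : IsIdempotentElem P) {C : M →L[R] N}
    (h : C.range ≤ P.range) : P ∘L C = C :=
  coe_injective <| (LinearMap.IsIdempotentElem.comp_eq_right_iff hP.toLinearMap _).2 h

variable {B : M →L[R] N} {C : N →L[R] M} {Q : M →L[R] M} {P : N →L[R] N}

theorem range_eq_of_comp_eq (hCB : C ∘L B = Q) (hQC : Q ∘L C = C) : C.range = Q.range := by
  apply le_antisymm
  · rw [← hQC]
    exact LinearMap.range_comp_le_range (C : N →ₗ[R] M) (Q : M →ₗ[R] M)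
  · rw [← hCB]
    exact LinearMap.range_comp_le_range (B : M →ₗ[R] N) (C : N →ₗ[R] M)

theorem comp_eq_self_of_comp_eq (hBC : B ∘L C = P) (hCB : C ∘L B = Q) (hQC : Q ∘L C = C) :
    C ∘L P = C := by
  rw [← hBC, ← comp_assoc, hCB, hQC]

theorem ker_eq_of_comp_eq (hBC : B ∘L C = P) (hCB : C ∘L B = Q) (hQC : Q ∘L C = C) :
    C.ker = P.ker := by
  apply le_antisymm
  · rw [← hBC]
    exact LinearMap.ker_le_ker_comp (C : N →ₗ[R] M) (B : M →ₗ[R] N)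
  · conv_rhs => rw [← comp_eq_self_of_comp_eq hBC hCB hQC]
    exact LinearMap.ker_le_ker_comp (P : N →ₗ[R] N) (C : N →ₗ[R] M)

theorem eq_of_comp_eq (hBC : B ∘L C = P) (hCB : C ∘L B = Q) (hQC : Q ∘L C = C)
    {C' : N →L[R] M} (hBC' : B ∘L C' = P) (hQC' : Q ∘L C' = C') : C' = C :=
  calc C' = Q ∘L C' := hQC'.symm
    _ = C ∘L P := by rw [← hCB, comp_assoc, hBC']
    _ = C := comp_eq_self_of_comp_eq hBC hCB hQC

end Algebra

variable {𝕜 E F : Type*} [NontriviallyNormedField 𝕜]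
  [NormedAddCommGroup E] [NormedSpace 𝕜 E] [CompleteSpace E]
  [NormedAddCommGroup F] [NormedSpace 𝕜 F] [CompleteSpace F]

noncomputable def rangeEquivOfKerEq (B : E →L[𝕜] F) {Q : E →L[𝕜] E} (hQ : IsIdempotentElem Q)
    (hker : Q.ker = B.ker) (hB : IsClosed (B.range : Set F)) : Q.range ≃L[𝕜] B.range :=
  haveI := hQ.isClosed_range.completeSpace_coe
  haveI := hB.completeSpace_coe
  ContinuousLinearEquiv.ofBijective (B.restrict fun x _ => ⟨x, rfl⟩)
    (by
      rw [LinearMap.ker_eq_bot']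
      rintro ⟨x, hx⟩ hBx
      have hQx : x ∈ Q.ker := hker ▸ congrArg Subtype.val hBx
      have hx' : Q x = x := (LinearMap.IsIdempotentElem.mem_range_iff hQ.toLinearMap).1 hx
      exact Subtype.ext (hx'.symm.trans hQx))
    (by
      rw [LinearMap.range_eq_top]
      rintro ⟨_, x, rfl⟩
      refine ⟨⟨Q x, x, rfl⟩, Subtype.ext ?_⟩
      exact congrArg (· x) (comp_eq_self_of_ker_le hQ hker.le))

theorem exists_comp_eq_of_ker_eq_of_range_eq {B : E →L[𝕜] F} {Q : E →L[𝕜] E} {P : F →L[𝕜] F}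
    (hQ : IsIdempotentElem Q) (hker : Q.ker = B.ker) (hP : IsIdempotentElem P)
    (hran : P.range = B.range) :
    ∃ C : F →L[𝕜] E, B ∘L C = P ∧ C ∘L B = Q ∧ Q ∘L C = C := by
  let e := B.rangeEquivOfKerEq hQ hker (hran ▸ hP.isClosed_range)
  have hPB : P ∘L B = B := comp_eq_self_of_range_le hP hran.ge
  have hBQ : B ∘L Q = B := comp_eq_self_of_ker_le hQ hker.le
  let C : F →L[𝕜] E := Q.range.subtypeL ∘L (e.symm : B.range →L[𝕜] Q.range) ∘L
    P.codRestrict B.range fun y => hran ▸ ⟨y, rfl⟩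
  refine ⟨C, ?_, ?_, comp_eq_self_of_range_le hQ ?_⟩
  · ext y
    exact congrArg Subtype.val (e.apply_symm_apply _)
  · ext x
    have he : e ⟨Q x, x, rfl⟩ = ⟨P (B x), hran ▸ ⟨B x, rfl⟩⟩ :=
      Subtype.ext ((congrArg (· x) hBQ).trans (congrArg (· x) hPB).symm)
    exact congrArg Subtype.val (e.eq_symm_apply.2 he).symm
  · rintro _ ⟨y, rfl⟩
    exact (e.symm _).2

end ContinuousLinearMap

theorem stmt_4
    {H K : Type*}
    [NormedAddCommGroup H] [InnerProductSpace ℂ H] [CompleteSpace H]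
    [NormedAddCommGroup K] [InnerProductSpace ℂ K] [CompleteSpace K]
    (B : H →L[ℂ] K)
    (Q : H →L[ℂ] H) (hQ : Q ∘L Q = Q) (hQker : LinearMap.ker (Q : H →ₗ[ℂ] H) = LinearMap.ker (B : H →ₗ[ℂ] K))
    (P : K →L[ℂ] K) (hP : P ∘L P = P) (hPran : LinearMap.range (P : K →ₗ[ℂ] K) = LinearMap.range (B : H →ₗ[ℂ] K)) :
    ∃ C : K →L[ℂ] H,
      (B ∘L C = P ∧ LinearMap.range (C : K →ₗ[ℂ] H) = LinearMap.range (Q : H →ₗ[ℂ] H) ∧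
        B ∘L C ∘L B = B ∧ C ∘L B ∘L C = C ∧ C ∘L B = Q ∧
        LinearMap.ker (C : K →ₗ[ℂ] H) = LinearMap.ker (P : K →ₗ[ℂ] K)) ∧
      ∀ C' : K →L[ℂ] H, B ∘L C' = P → LinearMap.range (C' : K →ₗ[ℂ] H) = LinearMap.range (Q : H →ₗ[ℂ] H) → C' = C := by
  obtain ⟨C, hBC, hCB, hQC⟩ := exists_comp_eq_of_ker_eq_of_range_eq hQ hQker hP hPran
  refine ⟨C, ⟨hBC, range_eq_of_comp_eq hCB hQC, ?_, ?_, hCB, ker_eq_of_comp_eq hBC hCB hQC⟩,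
    fun C' hBC' hC' => eq_of_comp_eq hBC hCB hQC hBC' (comp_eq_self_of_range_le hQ hC'.le)⟩
  · rw [← comp_assoc, hBC, comp_eq_self_of_range_le hP hPran.ge]
  · rw [← comp_assoc, hCB, hQC]
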